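/- For every a > 0 and every ε ∈ (0,1) there exist constants K₀, K₁, δ₀ > 0 and m₀ ∈ ℕ such that for all z ∈ V_a with |z| < δ₀ and all m ≥ m₀, writing x = Re z (so x > 0), one has sinh(mx) ≤ |sinh(mz)| ≤ K₀ sinh(mx) and (1/2) sinh((1−ε)mx) ≤ |D_m(z)| ≤ K₁ sinh((1+ε)mx). -/

import Mathlib

open scoped Real BigOperators

/-- `D_m(z) = ((1+z)/2)(1−z)^{−m} − ((1−z)/2)(1+z)^{−m}`. -/
noncomputable def Dm (m : ℕ) (z : ℂ) : ℂ :=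
  (1 + z) / 2 * (1 - z) ^ (-(m : ℤ)) - (1 - z) / 2 * (1 + z) ^ (-(m : ℤ))

/-- The wedge `V_a = {z ∈ ℂ : |Im z| < a·Re z}`. -/
def wedge (a : ℝ) : Set ℂ := {z : ℂ | |z.im| < a * z.re}

/-!
With `P = (1 - z)⁻¹` and `Q = (1 + z)⁻¹`, `D_m(z) = ((1+z)/2) Pᵐ - ((1-z)/2) Qᵐ`. In the wedge
`|z| ≤ (1+a) x` with `x = Re z`, so for small `z` one has `e^{(1-ε)x} ≤ |P| ≤ e^{(1+ε)x}` and
`|Q| ≤ e^{-(1-ε)x}`. For the lower bound the first term is at least `e^{(1-ε)mx}/2` and the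
second at most `(1+|z|) e^{-(1-ε)mx}/2`, and `|z| ≤ (1-ε)mx ≤ sinh((1-ε)mx)` once `m` is large.
For the upper bound write `D_m = (Pᵐ - Qᵐ)/2 + (z/2)(Pᵐ + Qᵐ)`: since `P - Q = 2zPQ`, the mean
value estimate and the triangle inequality together bound `|Pᵐ - Qᵐ|` by `2 min(m|z|, 1) e^γ`,
`γ = (1+ε)mx`, and `min(γ, 1) e^γ ≤ 3 sinh γ`. The `sinh` bounds come from
`|sinh(u + iv)|² = sinh² u + sin² v` and `|sin v| ≤ |v| ≤ a u`.
-/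

namespace Real

theorem exp_le_of_one_le_mul_one_sub {s u : ℝ} (hu : 0 ≤ u) (h : 1 ≤ u * (1 - s)) :
    exp s ≤ u := by
  have hs : 0 < 1 - s := pos_of_mul_pos_right (one_pos.trans_le h) hu
  have h₁ : exp s * (1 - s) ≤ 1 := by
    calc exp s * (1 - s) ≤ exp s * exp (-s) := by gcongr; linarith [add_one_le_exp (-s)]
      _ = 1 := by rw [← exp_add, add_neg_cancel, exp_zero]
  nlinarith

theorem min_mul_exp_le_three_mul_sinh {x : ℝ} (hx : 0 ≤ x) :
    min x 1 * exp x ≤ 3 * sinh x := by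
  rcases le_total x 1 with h | h
  · have : exp x < 3 := by linarith [exp_le_exp.2 h, exp_one_lt_d9]
    rw [min_eq_left h]
    nlinarith [self_le_sinh_iff.2 hx]
  · have : 3 ≤ exp x * exp x := by rw [← exp_add]; linarith [add_one_le_exp (x + x)]
    have : exp (-x) * exp x = 1 := by rw [← exp_add, neg_add_cancel, exp_zero]
    rw [min_eq_right h, sinh_eq]
    nlinarith [exp_pos x]

end Real

theorem norm_pow_sub_pow_le {R : Type*} [NormedCommRing R] [NormOneClass R] {x y : R} {M : ℝ}
    (hx : ‖x‖ ≤ M) (hy : ‖y‖ ≤ M) (n : ℕ) :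
    ‖x ^ n - y ^ n‖ ≤ n * M ^ (n - 1) * ‖x - y‖ := by
  have hM : 0 ≤ M := (norm_nonneg x).trans hx
  rw [← geom_sum₂_mul]
  refine (norm_mul_le _ _).trans (mul_le_mul_of_nonneg_right ?_ (norm_nonneg _))
  refine (norm_sum_le _ _).trans ?_
  calc ∑ i ∈ Finset.range n, ‖x ^ i * y ^ (n - 1 - i)‖
      ≤ ∑ i ∈ Finset.range n, M ^ (n - 1) := by
        refine Finset.sum_le_sum fun i hi => ?_
        have hi : i ≤ n - 1 := by have := Finset.mem_range.1 hi; omega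
        calc ‖x ^ i * y ^ (n - 1 - i)‖ ≤ ‖x‖ ^ i * ‖y‖ ^ (n - 1 - i) :=
              (norm_mul_le _ _).trans (mul_le_mul (norm_pow_le _ _) (norm_pow_le _ _)
                (norm_nonneg _) (by positivity))
          _ ≤ M ^ i * M ^ (n - 1 - i) := by gcongr
          _ = M ^ (n - 1) := by rw [← pow_add, Nat.add_sub_cancel' hi]
    _ = n * M ^ (n - 1) := by simp

theorem norm_pow_sub_pow_le_two_mul_min {R : Type*} [NormedCommRing R] [NormOneClass R]
    {x y : R} {M c : ℝ} (hx : ‖x‖ ≤ M) (hy : ‖y‖ ≤ M) (hxy : ‖x - y‖ ≤ 2 * c * M) (n : ℕ) :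
    ‖x ^ n - y ^ n‖ ≤ 2 * min (n * c) 1 * M ^ n := by
  have hM : 0 ≤ M := (norm_nonneg x).trans hx
  have hlin : ‖x ^ n - y ^ n‖ ≤ 2 * (n * c) * M ^ n := by
    refine (norm_pow_sub_pow_le hx hy n).trans ?_
    rcases n with _ | n
    · simp
    · calc ((n + 1 : ℕ) : ℝ) * M ^ (n + 1 - 1) * ‖x - y‖
          ≤ ((n + 1 : ℕ) : ℝ) * M ^ n * (2 * c * M) := by rw [Nat.add_sub_cancel]; gcongr
        _ = 2 * ((n + 1 : ℕ) * c) * M ^ (n + 1) := by ring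
  have hbdd : ‖x ^ n - y ^ n‖ ≤ 2 * M ^ n := by
    have := norm_sub_le (x ^ n) (y ^ n)
    have : ‖x ^ n‖ ≤ M ^ n := (norm_pow_le _ _).trans (by gcongr)
    have : ‖y ^ n‖ ≤ M ^ n := (norm_pow_le _ _).trans (by gcongr)
    linarith
  rcases min_cases (n * c) 1 with ⟨h, -⟩ | ⟨h, -⟩ <;> rw [h] <;> linarith

namespace Complex

theorem norm_sinh_sq (z : ℂ) : ‖sinh z‖ ^ 2 = Real.sinh z.re ^ 2 + Real.sin z.im ^ 2 := by
  have h : sinh z = ↑(Real.sinh z.re * Real.cos z.im) + ↑(Real.cosh z.re * Real.sin z.im) * I := by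
    conv_lhs => rw [← re_add_im z]
    rw [sinh_add, sinh_mul_I, cosh_mul_I]
    push_cast
    ring
  rw [h, Complex.sq_norm, normSq_add_mul_I]
  nlinarith [Real.sin_sq_add_cos_sq z.im, Real.cosh_sq z.re]

theorem sinh_re_le_norm_sinh (z : ℂ) : Real.sinh z.re ≤ ‖sinh z‖ :=
  (abs_le_of_sq_le_sq' (by nlinarith [norm_sinh_sq z]) (norm_nonneg _)).2

theorem norm_sinh_le {a : ℝ} {z : ℂ} (hx : 0 < z.re) (hz : |z.im| ≤ a * z.re) :
    ‖sinh z‖ ≤ (1 + a) * Real.sinh z.re := by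
  have ha : 0 ≤ a := nonneg_of_mul_nonneg_left ((abs_nonneg _).trans hz) hx
  have hsinh : z.re ≤ Real.sinh z.re := Real.self_le_sinh_iff.2 hx.le
  have hsin : |Real.sin z.im| ≤ a * Real.sinh z.re :=
    Real.abs_sin_le_abs.trans (hz.trans (by gcongr))
  have : 0 ≤ Real.sinh z.re := Real.sinh_nonneg_iff.2 hx.le
  refine (abs_le_of_sq_le_sq' ?_ (by positivity)).2
  rw [norm_sinh_sq]
  nlinarith [sq_abs (Real.sin z.im), abs_nonneg (Real.sin z.im)]

theorem norm_one_sub_sq (z : ℂ) : ‖1 - z‖ ^ 2 = 1 - 2 * z.re + ‖z‖ ^ 2 := by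
  rw [Complex.sq_norm, Complex.sq_norm, normSq_apply, normSq_apply]
  simp only [sub_re, one_re, sub_im, one_im]
  ring

theorem norm_one_sub_le_exp {z : ℂ} {ε : ℝ} (h : ‖z‖ ^ 2 ≤ 2 * ε * z.re) :
    ‖1 - z‖ ≤ Real.exp (-((1 - ε) * z.re)) := by
  have hre := re_le_norm z
  have hpos : 0 ≤ 1 - (1 - ε) * z.re := by nlinarith [norm_nonneg z]
  refine (abs_le_of_sq_le_sq' ?_ hpos).2.trans
    (by linarith [Real.add_one_le_exp (-((1 - ε) * z.re))])
  nlinarith [norm_one_sub_sq z, sq_nonneg ((1 - ε) * z.re)]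

theorem exp_neg_le_norm_one_sub {z : ℂ} {ε : ℝ} (hε : 0 ≤ ε) (hx : 0 ≤ z.re)
    (h : (1 + ε) * z.re ≤ ε) : Real.exp (-((1 + ε) * z.re)) ≤ ‖1 - z‖ := by
  have : 1 - z.re ≤ ‖1 - z‖ := by simpa using re_le_norm (1 - z)
  refine (Real.exp_le_of_one_le_mul_one_sub (by nlinarith) ?_).trans this
  nlinarith

theorem exp_le_norm_one_add {z : ℂ} {ε : ℝ} (hx : 0 ≤ z.re) (h : (1 - ε) * z.re ≤ ε) :
    Real.exp ((1 - ε) * z.re) ≤ ‖1 + z‖ := by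
  have : 1 + z.re ≤ ‖1 + z‖ := by simpa using re_le_norm (1 + z)
  refine (Real.exp_le_of_one_le_mul_one_sub (by linarith) ?_).trans this
  nlinarith

theorem one_le_norm_one_add {z : ℂ} (hx : 0 ≤ z.re) : 1 ≤ ‖1 + z‖ := by
  have : 1 + z.re ≤ ‖1 + z‖ := by simpa using re_le_norm (1 + z)
  linarith

end Complex

section Dm

open Real

theorem Dm_eq_inv_pow (m : ℕ) (z : ℂ) :
    Dm m z = (1 + z) / 2 * (1 - z)⁻¹ ^ m - (1 - z) / 2 * (1 + z)⁻¹ ^ m := by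
  simp only [Dm, zpow_neg, zpow_natCast, inv_pow]

theorem sinh_sub_le_norm_Dm {z : ℂ} {s : ℝ} (hz : z ≠ 1) (hs : 0 ≤ s)
    (hsub : ‖1 - z‖ ≤ exp (-s)) (hadd : exp s ≤ ‖1 + z‖) (m : ℕ) :
    sinh (m * s) - ‖z‖ / 2 ≤ ‖Dm m z‖ := by
  have hP : exp s ≤ ‖(1 - z)⁻¹‖ := by
    rw [norm_inv, ← inv_inv (exp s), ← exp_neg]
    exact inv_anti₀ (norm_pos_iff.2 (sub_ne_zero.2 hz.symm)) hsub
  have hQ : ‖(1 + z)⁻¹‖ ≤ exp (-s) := by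
    rw [norm_inv, exp_neg]
    exact inv_anti₀ (exp_pos s) hadd
  have h₁ : exp (m * s) / 2 ≤ ‖(1 + z) / 2 * (1 - z)⁻¹ ^ m‖ := by
    rw [norm_mul, norm_div, norm_pow, Complex.norm_two, exp_nat_mul]
    have : 1 ≤ ‖1 + z‖ := (one_le_exp hs).trans hadd
    have : exp s ^ m ≤ ‖(1 - z)⁻¹‖ ^ m := by gcongr
    nlinarith [pow_pos (exp_pos s) m]
  have h₂ : ‖(1 - z) / 2 * (1 + z)⁻¹ ^ m‖ ≤ (1 + ‖z‖) / 2 * exp (-(m * s)) := by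
    rw [norm_mul, norm_div, norm_pow, Complex.norm_two, ← mul_neg, exp_nat_mul]
    gcongr
    simpa using norm_sub_le (1 : ℂ) z
  have h₃ : exp (-(m * s)) ≤ 1 := exp_le_one_iff.2 (by have := m.cast_nonneg (α := ℝ); nlinarith)
  have := norm_sub_norm_le ((1 + z) / 2 * (1 - z)⁻¹ ^ m) ((1 - z) / 2 * (1 + z)⁻¹ ^ m)
  rw [Dm_eq_inv_pow, sinh_eq]
  nlinarith [norm_nonneg z]

theorem norm_Dm_le {z : ℂ} {t : ℝ} (ht : 0 ≤ t) (hsub : exp (-t) ≤ ‖1 - z‖)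
    (hadd : 1 ≤ ‖1 + z‖) (m : ℕ) : ‖Dm m z‖ ≤ (min (m * ‖z‖) 1 + ‖z‖) * exp (m * t) := by
  have hsub' : 1 - z ≠ 0 := norm_pos_iff.1 ((exp_pos _).trans_le hsub)
  have hadd' : 1 + z ≠ 0 := norm_pos_iff.1 (one_pos.trans_le hadd)
  set P := (1 - z)⁻¹
  set Q := (1 + z)⁻¹
  have hP : ‖P‖ ≤ exp t := by
    rw [norm_inv, ← inv_inv (exp t), ← exp_neg]
    exact inv_anti₀ (exp_pos _) hsub
  have hQ : ‖Q‖ ≤ 1 := by rw [norm_inv]; exact inv_le_one_of_one_le₀ hadd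
  have hQ' : ‖Q‖ ≤ exp t := hQ.trans (one_le_exp ht)
  have hPm : ‖P ^ m‖ ≤ exp (m * t) := by rw [norm_pow, exp_nat_mul]; gcongr
  have hQm : ‖Q ^ m‖ ≤ exp (m * t) := by rw [norm_pow, exp_nat_mul]; gcongr
  have hsum : ‖P ^ m + Q ^ m‖ ≤ 2 * exp (m * t) := by
    linarith [norm_add_le (P ^ m) (Q ^ m)]
  have hPQ : ‖P - Q‖ ≤ 2 * ‖z‖ * exp t := by
    have : P - Q = 2 * z * (P * Q) := by simp only [P, Q]; field_simp; ring
    rw [this, norm_mul, norm_mul, norm_mul, Complex.norm_two]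
    gcongr
    calc ‖P‖ * ‖Q‖ ≤ exp t * 1 := mul_le_mul hP hQ (norm_nonneg _) (exp_pos t).le
      _ = exp t := mul_one _
  have hdiff := norm_pow_sub_pow_le_two_mul_min hP hQ' hPQ m
  rw [← exp_nat_mul] at hdiff
  have hDm : Dm m z = (P ^ m - Q ^ m) / 2 + z / 2 * (P ^ m + Q ^ m) := by
    rw [Dm_eq_inv_pow]; ring
  rw [hDm]
  refine (norm_add_le _ _).trans ?_
  rw [norm_div, norm_mul, norm_div, Complex.norm_two]
  nlinarith [norm_nonneg z]

end Dm

section wedge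

open Real

variable {a : ℝ} {z : ℂ}

theorem re_pos_of_mem_wedge (ha : 0 ≤ a) (hz : z ∈ wedge a) : 0 < z.re :=
  pos_of_mul_pos_right ((abs_nonneg _).trans_lt hz) ha

theorem norm_le_of_mem_wedge (ha : 0 ≤ a) (hz : z ∈ wedge a) : ‖z‖ ≤ (1 + a) * z.re := by
  have hz' : |z.im| < a * z.re := hz
  have := Complex.norm_le_abs_re_add_abs_im z
  rw [abs_of_pos (re_pos_of_mem_wedge ha hz)] at this
  linarith

theorem natCast_mul_mem_wedge {m : ℕ} (hm : m ≠ 0) (hz : z ∈ wedge a) :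
    (m : ℂ) * z ∈ wedge a := by
  have hz' : |z.im| < a * z.re := hz
  have : (0 : ℝ) < m := by positivity
  show |((m : ℂ) * z).im| < a * ((m : ℂ) * z).re
  simp only [Complex.mul_re, Complex.mul_im, Complex.natCast_re, Complex.natCast_im, zero_mul,
    sub_zero, add_zero, abs_mul, Nat.abs_cast]
  nlinarith

theorem half_sinh_le_norm_Dm_of_mem_wedge {ε : ℝ} (ha : 0 ≤ a) (hz : z ∈ wedge a)
    (hzε : 2 * (1 + a) * ‖z‖ ≤ ε) {m : ℕ} (hm : 1 + a ≤ (1 - ε) * m) :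
    1 / 2 * sinh ((1 - ε) * m * z.re) ≤ ‖Dm m z‖ := by
  have hx := re_pos_of_mem_wedge ha hz
  have hr := norm_le_of_mem_wedge ha hz
  have hre := Complex.re_le_norm z
  have hε : ε < 1 := by nlinarith [m.cast_nonneg (α := ℝ)]
  have hz1 : z ≠ 1 := by rintro rfl; norm_num at hzε; linarith
  have hsub := Complex.norm_one_sub_le_exp (ε := ε) (z := z) (by nlinarith)
  have hadd := Complex.exp_le_norm_one_add (ε := ε) hx.le (by nlinarith)
  have key := sinh_sub_le_norm_Dm hz1 (by nlinarith) hsub hadd m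
  have hrs : ‖z‖ ≤ sinh (m * ((1 - ε) * z.re)) :=
    calc ‖z‖ ≤ (1 + a) * z.re := hr
      _ ≤ m * ((1 - ε) * z.re) := by nlinarith
      _ ≤ sinh (m * ((1 - ε) * z.re)) := self_le_sinh_iff.2 (by positivity)
  rw [show (1 - ε) * m * z.re = m * ((1 - ε) * z.re) by ring]
  linarith

theorem norm_Dm_le_mul_sinh_of_mem_wedge {ε : ℝ} (ha : 0 ≤ a) (hz : z ∈ wedge a) (hε : ε ≤ 1)
    (hzε : 2 * (1 + a) * ‖z‖ ≤ ε) {m : ℕ} (hm : 1 ≤ m) :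
    ‖Dm m z‖ ≤ 6 * (1 + a) * sinh ((1 + ε) * m * z.re) := by
  have hx := re_pos_of_mem_wedge ha hz
  have hr := norm_le_of_mem_wedge ha hz
  have hre := Complex.re_le_norm z
  have hε0 : 0 ≤ ε := le_trans (by positivity) hzε
  have hm' : (1 : ℝ) ≤ m := by exact_mod_cast hm
  have hsub := Complex.exp_neg_le_norm_one_sub hε0 hx.le (by nlinarith)
  have hbound := norm_Dm_le (by positivity) hsub (Complex.one_le_norm_one_add hx.le) m
  rw [show (1 + ε) * m * z.re = m * ((1 + ε) * z.re) by ring]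
  set γ := m * ((1 + ε) * z.re)
  have hγ : 0 ≤ γ := by positivity
  have hmin : min (m * ‖z‖) 1 + ‖z‖ ≤ 2 * ((1 + a) * min γ 1) := by
    have h₁ : ‖z‖ ≤ min (m * ‖z‖) 1 := le_min (by nlinarith [norm_nonneg z]) (by nlinarith)
    have h₂ : min (m * ‖z‖) 1 ≤ (1 + a) * min γ 1 := by
      rw [mul_min_of_nonneg _ _ (by positivity)]
      refine min_le_min ?_ (by linarith)
      have : 0 ≤ (1 + a) * m * (ε * z.re) := by positivity
      calc m * ‖z‖ ≤ m * ((1 + a) * z.re) := by gcongr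
        _ ≤ (1 + a) * γ := by simp only [γ]; nlinarith
    linarith
  calc ‖Dm m z‖ ≤ (min (m * ‖z‖) 1 + ‖z‖) * exp γ := hbound
    _ ≤ 2 * (1 + a) * (min γ 1 * exp γ) := by nlinarith [exp_pos γ]
    _ ≤ 2 * (1 + a) * (3 * sinh γ) :=
      mul_le_mul_of_nonneg_left (min_mul_exp_le_three_mul_sinh hγ) (by positivity)
    _ = 6 * (1 + a) * sinh γ := by ring

end wedge

/-- For every `a > 0` and `ε ∈ (0,1)` there are `K₀, K₁, δ₀ > 0` and `m₀ ∈ ℕ` such that for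
all `z ∈ V_a` with `|z| < δ₀` and all `m ≥ m₀`, writing `x = Re z`,
`sinh(mx) ≤ |sinh(mz)| ≤ K₀ sinh(mx)` and `(1/2)sinh((1−ε)mx) ≤ |D_m(z)| ≤ K₁ sinh((1+ε)mx)`. -/
theorem sinh_Dm_bounds (a : ℝ) (ha : 0 < a) (ε : ℝ) (hε0 : 0 < ε) (hε1 : ε < 1) :
    ∃ K₀ K₁ δ₀ : ℝ, 0 < K₀ ∧ 0 < K₁ ∧ 0 < δ₀ ∧ ∃ m₀ : ℕ,
      ∀ z : ℂ, z ∈ wedge a → ‖z‖ < δ₀ → ∀ m : ℕ, m₀ ≤ m →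
        (Real.sinh (m * z.re) ≤ ‖Complex.sinh (m * z)‖ ∧
          ‖Complex.sinh (m * z)‖ ≤ K₀ * Real.sinh (m * z.re)) ∧
        ((1 / 2) * Real.sinh ((1 - ε) * m * z.re) ≤ ‖Dm m z‖ ∧
          ‖Dm m z‖ ≤ K₁ * Real.sinh ((1 + ε) * m * z.re)) := by
  refine ⟨1 + a, 6 * (1 + a), ε / (2 * (1 + a)), by positivity, by positivity, by positivity,
    ⌈(1 + a) / (1 - ε)⌉₊, fun z hz hzδ m hm => ?_⟩
  have hzε : 2 * (1 + a) * ‖z‖ ≤ ε := by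
    rw [lt_div_iff₀ (by positivity)] at hzδ
    linarith
  have hm₀ : 1 + a ≤ (1 - ε) * m := by
    have := Nat.ceil_le.1 hm
    rw [div_le_iff₀ (by linarith)] at this
    linarith
  have hm1 : 1 ≤ m := by exact_mod_cast (show (1 : ℝ) ≤ m by nlinarith)
  have hmz := natCast_mul_mem_wedge (Nat.one_le_iff_ne_zero.1 hm1) hz
  refine ⟨⟨?_, ?_⟩, half_sinh_le_norm_Dm_of_mem_wedge ha.le hz hzε hm₀,
    norm_Dm_le_mul_sinh_of_mem_wedge ha.le hz hε1.le hzε hm1⟩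
  · simpa using Complex.sinh_re_le_norm_sinh (m * z)
  · simpa using Complex.norm_sinh_le (re_pos_of_mem_wedge ha.le hmz) hmz.le
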